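/- arXiv:1701.02762 — 2 statements merged into one kernel-verified Lean document; each statement's English description precedes it below -/
import Mathlib

section
/- There exists a set B ⊆ ℝ² of Lebesgue measure zero that contains a circle centered at every point of a straight line: for every t ∈ ℝ there exists r > 0 such that the circle of radius r centered at the point (t, 0) is contained in B. (Talagrand's example.) -/
/-!
A Borel set `K ⊆ ℝ²` with null vertical sections that contains a line `v = c + x t` of every
slope `t`, with arbitrarily large intercept `c`, is built as in Besicovitch's construction:
nested tubes around functions `u_r` that have slope `-σ_r` on each interval of a grid of mesh
`1 / N_r`, where `σ_r` runs through every rational infinitely often and the tube width is at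
most `1 / (r N_r)`. The line of slope `s ∈ [0, 1)` gets the intercept `lim u_r s`; for `x` near
`σ_r` these lines meet the vertical line at `x` in `N_r` intervals of total length
`2 |x - σ_r| + 2 / r`.

The map `(x, y) ↦ (2 x, x² + y²)` sends the circle about `(t, 0)` of radius `√(c + t²)` into
the line of slope `t` and intercept `c`. So the preimage of `K` contains such circles, and it is
null by Fubini, since `y ↦ x² + y²` pulls null sets back to null sets.
-/

open MeasureTheory Metric Set

namespace Talagrand

noncomputable def anchor (N : ℕ) (t : ℝ) : ℝ := ⌊t * N⌋ / N

section Anchor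

variable {N : ℕ}

lemma floor_mul_eq_of_dvd {N' : ℕ} (hN : N ∣ N') (hN' : 0 < N') {t t' : ℝ}
    (h : ⌊t * N'⌋ = ⌊t' * N'⌋) : ⌊t * N⌋ = ⌊t' * N⌋ := by
  obtain ⟨K, rfl⟩ := hN
  have hK : K ≠ 0 := by rintro rfl; simp at hN'
  have key : ∀ x : ℝ, ⌊x * N⌋ = ⌊x * (N * K : ℕ)⌋ / K := fun x => by
    rw [← Int.floor_div_natCast]
    congr 1
    push_cast
    field_simp
  rw [key, key, h]

lemma floor_anchor_mul (hN : 0 < N) (t : ℝ) : ⌊anchor N t * N⌋ = ⌊t * N⌋ := by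
  rw [anchor, div_mul_cancel₀ _ (by positivity), Int.floor_intCast]

lemma anchor_le (hN : 0 < N) (t : ℝ) : anchor N t ≤ t := by
  rw [anchor, div_le_iff₀ (by positivity)]
  exact Int.floor_le _

lemma lt_anchor_add (hN : 0 < N) (t : ℝ) : t < anchor N t + (N : ℝ)⁻¹ := by
  have hN' : (0 : ℝ) < N := by positivity
  rw [anchor, div_add' _ _ _ hN'.ne', inv_mul_cancel₀ hN'.ne', lt_div_iff₀ hN']
  exact Int.lt_floor_add_one _

lemma abs_mul_sub_anchor_le (hN : 0 < N) (x t : ℝ) : |x * (t - anchor N t)| ≤ |x| / N := by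
  rw [abs_mul, div_eq_mul_inv]
  gcongr
  rw [abs_of_nonneg (sub_nonneg.2 (anchor_le hN t))]
  linarith [lt_anchor_add hN t]

end Anchor

/-- The tube `{(t, v) | u t ≤ v ≤ u t + width}` around a function `u` whose graph is, on each
grid interval `[z / N, (z + 1) / N)`, a segment of slope `-slope`. -/
structure Tube where
  N : ℕ
  slope : ℝ
  width : ℝ
  u : ℝ → ℝ
  N_pos : 0 < N
  width_pos : 0 < width
  u_add_slope_mul_eq : ∀ t t' : ℝ, ⌊t * N⌋ = ⌊t' * N⌋ → u t + slope * t = u t' + slope * t'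

namespace Tube

variable (T : Tube)

noncomputable def refineN (σ : ℝ) : ℕ := T.N * (⌈4 * |σ - T.slope| / T.width⌉₊ + 1)

lemma refineN_pos (σ : ℝ) : 0 < T.refineN σ := Nat.mul_pos T.N_pos (Nat.succ_pos _)

lemma abs_sub_slope_div_refineN_le (σ : ℝ) : |σ - T.slope| / T.refineN σ ≤ T.width / 4 := by
  have hK : 4 * |σ - T.slope| / T.width ≤ T.refineN σ := calc
    _ ≤ (⌈4 * |σ - T.slope| / T.width⌉₊ : ℝ) := Nat.le_ceil _
    _ ≤ ((⌈4 * |σ - T.slope| / T.width⌉₊ + 1 : ℕ) : ℝ) := by push_cast; linarith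
    _ ≤ T.refineN σ := by
      rw [refineN]; exact_mod_cast Nat.le_mul_of_pos_left _ T.N_pos
  rw [div_le_iff₀ T.width_pos] at hK
  rw [div_le_iff₀ (by exact_mod_cast T.refineN_pos σ)]
  linarith

/-- On each interval of the finer grid, `u` is replaced by the segment of slope `-σ` through
its value at the left endpoint, lifted by `|σ - slope| / refineN σ` so as to stay above `u`;
the grid is fine enough (`abs_sub_slope_div_refineN_le`) for it to stay inside the old tube. -/
noncomputable def refine (σ ε : ℝ) (hε : 0 < ε) : Tube where
  N := T.refineN σ
  slope := σ
  width := min (ε / T.refineN σ) (T.width / 2)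
  u t := T.u (anchor (T.refineN σ) t) + σ * (anchor (T.refineN σ) t - t) +
    |σ - T.slope| / T.refineN σ
  N_pos := T.refineN_pos σ
  width_pos := lt_min (div_pos hε (by exact_mod_cast T.refineN_pos σ)) (half_pos T.width_pos)
  u_add_slope_mul_eq t t' h := by simp only [anchor, h]; ring

lemma Icc_refine_subset (σ ε : ℝ) (hε : 0 < ε) (t : ℝ) :
    Icc ((T.refine σ ε hε).u t) ((T.refine σ ε hε).u t + (T.refine σ ε hε).width) ⊆
      Icc (T.u t) (T.u t + T.width) := by
  set a := anchor (T.refineN σ) t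
  have hu : T.u t + T.slope * t = T.u a + T.slope * a :=
    T.u_add_slope_mul_eq _ _ <| floor_mul_eq_of_dvd (dvd_mul_right _ _) (T.refineN_pos σ)
      (floor_anchor_mul (T.refineN_pos σ) t).symm
  have hdev : |(σ - T.slope) * (t - a)| ≤ |σ - T.slope| / T.refineN σ :=
    abs_mul_sub_anchor_le (T.refineN_pos σ) _ t
  have hN := T.abs_sub_slope_div_refineN_le σ
  have hw : (T.refine σ ε hε).width ≤ T.width / 2 := min_le_right _ _
  have hu' : (T.refine σ ε hε).u t = T.u a + σ * (a - t) + |σ - T.slope| / T.refineN σ := rfl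
  rw [hu']
  rw [abs_le] at hdev
  apply Icc_subset_Icc <;> linarith

lemma refine_N_mul_width_le (σ ε : ℝ) (hε : 0 < ε) :
    ((T.refine σ ε hε).N : ℝ) * (T.refine σ ε hε).width ≤ ε := by
  have hN : (0 : ℝ) < T.refineN σ := by exact_mod_cast T.refineN_pos σ
  calc ((T.refineN σ : ℕ) : ℝ) * min (ε / T.refineN σ) (T.width / 2)
      ≤ T.refineN σ * (ε / T.refineN σ) := by gcongr; exact min_le_left _ _
    _ = ε := mul_div_cancel₀ _ hN.ne'

/-- Contains the lines `{(x, c + x * s)}` for `s` in the `z`-th grid interval and `c` in the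
tube over `s`; its section at `x` has length `2 (|x - slope| / N + width)`. -/
def strip (z : ℕ) : Set (ℝ × ℝ) :=
  {p | |p.2 - (T.u (z / T.N) + p.1 * (z / T.N))| ≤ |p.1 - T.slope| / T.N + T.width}

def cover : Set (ℝ × ℝ) := ⋃ z ∈ Finset.range T.N, T.strip z

lemma measurableSet_cover : MeasurableSet T.cover :=
  Finset.measurableSet_biUnion _ fun _ _ => measurableSet_le (by fun_prop) (by fun_prop)

lemma mk_mem_cover {s : ℝ} (hs : s ∈ Ico 0 1) {c : ℝ} (hc : c ∈ Icc (T.u s) (T.u s + T.width))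
    (x : ℝ) : (x, c + x * s) ∈ T.cover := by
  have hN : (0 : ℝ) < T.N := by exact_mod_cast T.N_pos
  have hsN : 0 ≤ s * T.N := mul_nonneg hs.1 hN.le
  have hz : ⌊s * T.N⌋₊ < T.N := (Nat.floor_lt hsN).2 (by nlinarith [hs.2])
  refine mem_biUnion (Finset.mem_range.2 hz) ?_
  have ha : (⌊s * T.N⌋₊ : ℝ) / T.N = anchor T.N s := by
    rw [anchor, natCast_floor_eq_intCast_floor hsN]
  have hu := T.u_add_slope_mul_eq _ _ (floor_anchor_mul T.N_pos s)
  have hdev : |(x - T.slope) * (s - anchor T.N s)| ≤ |x - T.slope| / T.N :=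
    abs_mul_sub_anchor_le T.N_pos _ s
  change |c + x * s - _| ≤ _
  rw [ha, abs_le]
  rw [abs_le] at hdev
  constructor <;> linarith [hc.1, hc.2]

lemma volume_cover_section_le (x : ℝ) :
    volume (Prod.mk x ⁻¹' T.cover) ≤ ENNReal.ofReal (2 * |x - T.slope| + 2 * T.N * T.width) := by
  have hN : (0 : ℝ) < T.N := by exact_mod_cast T.N_pos
  have hsection : ∀ z, Prod.mk x ⁻¹' T.strip z =
      closedBall (T.u (z / T.N) + x * (z / T.N)) (|x - T.slope| / T.N + T.width) := fun _ => rfl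
  calc volume (Prod.mk x ⁻¹' T.cover)
      ≤ ∑ z ∈ Finset.range T.N, volume (Prod.mk x ⁻¹' T.strip z) := by
        rw [cover, preimage_iUnion₂]; exact measure_biUnion_finset_le _ _
    _ = ENNReal.ofReal (2 * |x - T.slope| + 2 * T.N * T.width) := by
        simp only [hsection, Real.volume_closedBall, Finset.sum_const, Finset.card_range,
          nsmul_eq_mul]
        rw [← ENNReal.ofReal_natCast, ← ENNReal.ofReal_mul hN.le]
        congr 1
        field_simp

end Tube

noncomputable def tubes (σ : ℕ → ℝ) : ℕ → Tube
  | 0 => ⟨1, 0, 1, fun _ => 0, one_pos, one_pos, fun _ _ _ => by ring⟩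
  | r + 1 => (tubes σ r).refine (σ r) (1 / (r + 1)) (by positivity)

lemma antitone_Icc_tubes (σ : ℕ → ℝ) (t : ℝ) :
    Antitone fun r => Icc ((tubes σ r).u t) ((tubes σ r).u t + (tubes σ r).width) :=
  antitone_nat_of_succ_le fun r => (tubes σ r).Icc_refine_subset _ _ _ t

noncomputable def ratSeq (r : ℕ) : ℝ := (Denumerable.ofNat ℚ r.unpair.1 : ℝ)

lemma exists_le_abs_sub_ratSeq_lt (x : ℝ) {ε : ℝ} (hε : 0 < ε) (n : ℕ) :
    ∃ k, n ≤ k ∧ |x - ratSeq k| < ε := by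
  obtain ⟨q, hxq, hqx⟩ := exists_rat_btwn (lt_add_of_pos_right x hε)
  obtain ⟨i, hi⟩ : ∃ i, Denumerable.ofNat ℚ i = q := ⟨_, Denumerable.ofNat_encode q⟩
  refine ⟨Nat.pair i n, Nat.right_le_pair _ _, ?_⟩
  simp only [ratSeq, Nat.unpair_pair, hi, abs_lt]
  constructor <;> linarith

lemma eq_zero_of_forall_le_ofReal {a : ENNReal} (h : ∀ ε : ℝ, 0 < ε → a ≤ ENNReal.ofReal ε) :
    a = 0 :=
  le_antisymm (ENNReal.le_of_forall_pos_le_add fun ε hε _ => by simpa using h ε hε) bot_le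

theorem exists_besicovitch_unit :
    ∃ K : Set (ℝ × ℝ), MeasurableSet K ∧ (∀ x, volume (Prod.mk x ⁻¹' K) = 0) ∧
      ∀ s ∈ Ico (0 : ℝ) 1, ∃ c, ∀ x, (x, c + x * s) ∈ K := by
  refine ⟨⋂ r, (tubes ratSeq r).cover, .iInter fun r => (tubes ratSeq r).measurableSet_cover,
    fun x => eq_zero_of_forall_le_ofReal fun ε hε => ?_, fun s hs => ?_⟩
  · obtain ⟨n, hn⟩ := exists_nat_one_div_lt (by positivity : 0 < ε / 4)
    obtain ⟨k, hnk, hk⟩ := exists_le_abs_sub_ratSeq_lt x (by positivity : 0 < ε / 4) n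
    have hNw : ((tubes ratSeq (k + 1)).N : ℝ) * (tubes ratSeq (k + 1)).width ≤ 1 / (n + 1) :=
      ((tubes ratSeq k).refine_N_mul_width_le _ _ _).trans
        (one_div_le_one_div_of_le (by positivity) (by exact_mod_cast Nat.succ_le_succ hnk))
    calc volume (Prod.mk x ⁻¹' ⋂ r, (tubes ratSeq r).cover)
        ≤ volume (Prod.mk x ⁻¹' (tubes ratSeq (k + 1)).cover) :=
          measure_mono (preimage_mono (iInter_subset _ _))
      _ ≤ ENNReal.ofReal (2 * |x - ratSeq k| + 2 * _ * _) :=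
          (tubes ratSeq (k + 1)).volume_cover_section_le x
      _ ≤ ENNReal.ofReal ε := ENNReal.ofReal_le_ofReal (by linarith)
  · have hc := ciSup_mem_iInter_Icc_of_antitone_Icc (antitone_Icc_tubes ratSeq s)
      fun r => by linarith [(tubes ratSeq r).width_pos]
    exact ⟨_, fun x => mem_iInter.2 fun r => (tubes ratSeq r).mk_mem_cover hs (mem_iInter.1 hc r) x⟩

/-- Shears and vertical translates of the set of `exists_besicovitch_unit` give all slopes
and arbitrarily large intercepts. -/
theorem exists_besicovitch :
    ∃ K : Set (ℝ × ℝ), MeasurableSet K ∧ (∀ x, volume (Prod.mk x ⁻¹' K) = 0) ∧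
      ∀ t C : ℝ, ∃ c ≥ C, ∀ x, (x, c + x * t) ∈ K := by
  obtain ⟨K, hK, hnull, hlines⟩ := exists_besicovitch_unit
  refine ⟨⋃ (n : ℤ) (m : ℕ), (fun p => (p.1, p.2 + -(m + n * p.1))) ⁻¹' K,
    .iUnion fun n => .iUnion fun m => hK.preimage (by fun_prop), fun x => ?_, fun t C => ?_⟩
  · simp only [preimage_iUnion]
    refine measure_iUnion_null fun n => measure_iUnion_null fun m => ?_
    change volume ((· + -((m : ℝ) + n * x)) ⁻¹' (Prod.mk x ⁻¹' K)) = 0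
    rw [measure_preimage_add_right, hnull]
  · obtain ⟨c, hc⟩ := hlines (Int.fract t) ⟨Int.fract_nonneg t, Int.fract_lt_one t⟩
    refine ⟨c + ⌈C - c⌉₊, by linarith [Nat.le_ceil (C - c)], fun x => ?_⟩
    refine mem_iUnion₂.2 ⟨⌊t⌋, ⌈C - c⌉₊, ?_⟩
    change (x, c + ⌈C - c⌉₊ + x * t + -(⌈C - c⌉₊ + ⌊t⌋ * x)) ∈ K
    convert hc x using 2
    rw [← Int.self_sub_floor]
    ring

lemma volume_preimage_sq_eq_zero {s : Set ℝ} (hs : volume s = 0) :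
    volume ((fun y : ℝ => y ^ 2) ⁻¹' s) = 0 := by
  have hs' : volume (s ∩ Ioi 0) = 0 := measure_mono_null inter_subset_left hs
  have hsqrt : DifferentiableOn ℝ Real.sqrt (s ∩ Ioi 0) := fun z hz =>
    (differentiableAt_id.sqrt (ne_of_gt hz.2)).differentiableWithinAt
  have hcover : (fun y : ℝ => y ^ 2) ⁻¹' s ⊆
      {0} ∪ Real.sqrt '' (s ∩ Ioi 0) ∪ (fun z => -Real.sqrt z) '' (s ∩ Ioi 0) := by
    intro y hy
    rcases lt_trichotomy y 0 with hy0 | rfl | hy0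
    · refine Or.inr ⟨y ^ 2, ⟨hy, sq_pos_of_neg hy0⟩, ?_⟩
      change -Real.sqrt (y ^ 2) = y
      rw [Real.sqrt_sq_eq_abs, abs_of_neg hy0, neg_neg]
    · exact Or.inl (Or.inl rfl)
    · exact Or.inl (Or.inr ⟨y ^ 2, ⟨hy, pow_pos hy0 2⟩, Real.sqrt_sq hy0.le⟩)
  refine measure_mono_null hcover (measure_union_null (measure_union_null (by simp) ?_) ?_)
  · exact addHaar_image_eq_zero_of_differentiableOn_of_addHaar_eq_zero _ hsqrt hs'
  · exact addHaar_image_eq_zero_of_differentiableOn_of_addHaar_eq_zero _ hsqrt.neg hs'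

/-- The circle `(x - t)² + y² = c + t²` is mapped by `(x, y) ↦ (2 x, x² + y²)` into the line
of slope `t` and intercept `c`. -/
theorem exists_null_measurableSet_circles :
    ∃ B : Set (ℝ × ℝ), MeasurableSet B ∧ volume B = 0 ∧
      ∀ t : ℝ, ∃ r > (0 : ℝ), ∀ x y : ℝ, (x - t) ^ 2 + y ^ 2 = r ^ 2 → (x, y) ∈ B := by
  obtain ⟨K, hK, hnull, hlines⟩ := exists_besicovitch
  have hB : MeasurableSet ((fun p : ℝ × ℝ => (2 * p.1, p.1 ^ 2 + p.2 ^ 2)) ⁻¹' K) :=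
    hK.preimage (by fun_prop)
  refine ⟨_, hB, ?_, fun t => ?_⟩
  · rw [Measure.volume_eq_prod, Measure.measure_prod_null hB]
    refine Filter.Eventually.of_forall fun x => ?_
    change volume ((fun y : ℝ => y ^ 2) ⁻¹' ((fun v => x ^ 2 + v) ⁻¹' (Prod.mk (2 * x) ⁻¹' K))) = 0
    exact volume_preimage_sq_eq_zero ((measure_preimage_add _ _ _).trans (hnull _))
  · obtain ⟨c, hc, hcK⟩ := hlines t (1 - t ^ 2)
    have hr : 0 < c + t ^ 2 := by linarith
    refine ⟨Real.sqrt (c + t ^ 2), Real.sqrt_pos.2 hr, fun x y hxy => ?_⟩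
    rw [Real.sq_sqrt hr.le] at hxy
    change (2 * x, x ^ 2 + y ^ 2) ∈ K
    convert hcK (2 * x) using 2
    linear_combination hxy

lemma sq_sub_add_sq_eq_of_mem_sphere {z : EuclideanSpace ℝ (Fin 2)} {a b r : ℝ}
    (hz : z ∈ sphere ((WithLp.equiv 2 (Fin 2 → ℝ)).symm ![a, b]) r) :
    (z 0 - a) ^ 2 + (z 1 - b) ^ 2 = r ^ 2 := by
  rw [mem_sphere, EuclideanSpace.dist_eq] at hz
  rw [← hz, Real.sq_sqrt (by positivity), Fin.sum_univ_two]
  simp [Real.dist_eq, sq_abs]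

end Talagrand

open Talagrand in
/-- **Talagrand's example.** There is a planar set of Lebesgue measure zero containing
a circle centered at every point of a straight line. -/
theorem talagrand_example :
    ∃ B : Set (EuclideanSpace ℝ (Fin 2)), volume B = 0 ∧
      ∀ t : ℝ, ∃ r > (0 : ℝ),
        Metric.sphere ((WithLp.equiv 2 (Fin 2 → ℝ)).symm ![t, 0]) r ⊆ B := by
  obtain ⟨B, hBm, hB0, hcircles⟩ := exists_null_measurableSet_circles
  have he := (volume_preserving_finTwoArrow ℝ).comp
    (EuclideanSpace.volume_preserving_symm_measurableEquiv_toLp (Fin 2))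
  refine ⟨_ ⁻¹' B, by rw [he.measure_preimage hBm.nullMeasurableSet, hB0], fun t => ?_⟩
  obtain ⟨r, hr, hsub⟩ := hcircles t
  refine ⟨r, hr, fun z hz => hsub (z 0) (z 1) ?_⟩
  simpa using sq_sub_add_sq_eq_of_mem_sphere hz
end

section
/- Let B and S be finite subsets of ℝ × ℝ such that for every (x, y) ∈ S there exists r > 0 with all four points (x − r, y − r), (x − r, y + r), (x + r, y − r), (x + r, y + r) belonging to B. Then |B| ≥ (|S| / 2)^(3/4). (2-Dimensional Main Lemma.) -/
open Finset in
lemma pair_count (B P : Finset (ℝ × ℝ)) (f : ℝ × ℝ → ℝ) (t : ℝ) (ht : 1 ≤ t)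
    (hPB : P ⊆ B)
    (hpoor : ∀ a ∈ P, ((B.filter (fun b => f b = f a)).card : ℝ) ≤ t) :
    2 * ((((P ×ˢ P).filter (fun p => f p.1 = f p.2 ∧ p.1.1 < p.2.1)).card : ℝ))
      ≤ (B.card : ℝ) * (t - 1) := by
  classical
  set E := (P ×ˢ P).filter (fun p => f p.1 = f p.2 ∧ p.1.1 < p.2.1) with hE
  set E' := (P ×ˢ P).filter (fun p => f p.1 = f p.2 ∧ p.2.1 < p.1.1) with hE'
  set F := (P ×ˢ P).filter (fun p => f p.1 = f p.2 ∧ p.1.1 ≠ p.2.1) with hF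
  have himg : E' = E.image Prod.swap := by
    ext p
    simp only [hE, hE', Finset.mem_image, Finset.mem_filter, Finset.mem_product]
    constructor
    · intro hp
      exact ⟨(p.2, p.1), ⟨⟨hp.1.2, hp.1.1⟩, hp.2.1.symm, hp.2.2⟩, rfl⟩
    · rintro ⟨q, hq, rfl⟩
      exact ⟨⟨hq.1.2, hq.1.1⟩, hq.2.1.symm, hq.2.2⟩
  have hEE' : E.card = E'.card := by
    rw [himg, Finset.card_image_of_injective _ Prod.swap_injective]
  have hdisj : Disjoint E E' := by
    rw [Finset.disjoint_left]
    intro p hp hp'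
    simp only [hE, hE', Finset.mem_filter] at hp hp'
    exact absurd hp'.2.2 (not_lt.mpr hp.2.2.le)
  have hunion : E ∪ E' = F := by
    ext p
    simp only [hE, hE', hF, Finset.mem_union, Finset.mem_filter]
    constructor
    · rintro (⟨h1, h2, h3⟩ | ⟨h1, h2, h3⟩)
      · exact ⟨h1, h2, ne_of_lt h3⟩
      · exact ⟨h1, h2, (ne_of_lt h3).symm⟩
    · rintro ⟨h1, h2, h3⟩
      rcases lt_or_gt_of_ne h3 with h4 | h4
      · exact Or.inl ⟨h1, h2, h4⟩
      · exact Or.inr ⟨h1, h2, h4⟩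
  have hcard : E.card + E'.card = F.card := by
    rw [← Finset.card_union_of_disjoint hdisj, hunion]
  have hFsum : F.card = ∑ a ∈ P, (F.filter (fun p => p.1 = a)).card := by
    apply Finset.card_eq_sum_card_fiberwise
    intro p hp
    simp only [Finset.mem_coe, hF, Finset.mem_filter, Finset.mem_product] at hp
    exact hp.1.1
  have hfiber : ∀ a ∈ P, ((F.filter (fun p => p.1 = a)).card : ℝ) ≤ t - 1 := by
    intro a ha
    have hmap : (F.filter (fun p => p.1 = a)).card
        ≤ ((B.filter (fun b => f b = f a)).erase a).card := by
      apply Finset.card_le_card_of_injOn (fun p => p.2)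
      · intro p hp
        simp only [Finset.mem_coe, hF, Finset.mem_filter, Finset.mem_product] at hp
        obtain ⟨⟨⟨_, hp2⟩, hfe, hne⟩, hfst⟩ := hp
        rw [Finset.mem_coe, Finset.mem_erase]
        refine ⟨?_, ?_⟩
        · intro hcontr
          apply hne
          rw [hfst, show p.2 = a from hcontr]
        · rw [Finset.mem_filter]
          refine ⟨hPB hp2, ?_⟩
          rw [← hfe, hfst]
      · intro p hp q hq hpq
        simp only [Finset.mem_coe, Finset.mem_filter] at hp hq
        have h1 : p.1 = q.1 := by rw [hp.2, hq.2]
        exact Prod.ext h1 hpq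
    have hamem : a ∈ B.filter (fun b => f b = f a) := by
      rw [Finset.mem_filter]; exact ⟨hPB ha, rfl⟩
    have h1 : 1 ≤ (B.filter (fun b => f b = f a)).card :=
      Finset.card_pos.mpr ⟨a, hamem⟩
    have hcard2 : (((B.filter (fun b => f b = f a)).erase a).card : ℝ) ≤ t - 1 := by
      rw [Finset.card_erase_of_mem hamem]
      have ht' := hpoor a ha
      rw [Nat.cast_sub h1]
      push_cast
      linarith
    calc ((F.filter (fun p => p.1 = a)).card : ℝ)
        ≤ (((B.filter (fun b => f b = f a)).erase a).card : ℝ) := by exact_mod_cast hmap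
      _ ≤ t - 1 := hcard2
  have hF2 : (F.card : ℝ) ≤ (P.card : ℝ) * (t - 1) := by
    rw [hFsum]
    push_cast
    calc ∑ a ∈ P, ((F.filter (fun p => p.1 = a)).card : ℝ)
        ≤ ∑ a ∈ P, (t - 1) := Finset.sum_le_sum hfiber
      _ = P.card * (t - 1) := by rw [Finset.sum_const, nsmul_eq_mul]
  have hPle : (P.card : ℝ) ≤ (B.card : ℝ) := by exact_mod_cast Finset.card_le_card hPB
  have h2E : 2 * (E.card : ℝ) = (F.card : ℝ) := by
    rw [← hcard, hEE']; push_cast; ring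
  rw [h2E]
  calc (F.card : ℝ) ≤ (P.card : ℝ) * (t - 1) := hF2
    _ ≤ (B.card : ℝ) * (t - 1) := by nlinarith

open Finset in
lemma rich_card (B : Finset (ℝ × ℝ)) (f : ℝ × ℝ → ℝ) (t : ℝ) (htpos : 0 < t) :
    (((B.image f).filter (fun x => t < ((B.filter (fun b => f b = x)).card : ℝ))).card : ℝ)
      ≤ (B.card : ℝ) / t := by
  classical
  rw [le_div_iff₀ htpos]
  set R := (B.image f).filter (fun x => t < ((B.filter (fun b => f b = x)).card : ℝ)) with hR
  have hle : (R.card : ℝ) * t ≤ ∑ x ∈ R, ((B.filter (fun b => f b = x)).card : ℝ) := by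
    have h1 : (R.card : ℝ) * t = ∑ _x ∈ R, t := by
      rw [Finset.sum_const, nsmul_eq_mul]
    rw [h1]
    exact Finset.sum_le_sum (fun x hx => le_of_lt (Finset.mem_filter.mp hx).2)
  refine le_trans hle ?_
  have hmono : ∑ x ∈ R, ((B.filter (fun b => f b = x)).card : ℝ)
      ≤ ∑ x ∈ B.image f, ((B.filter (fun b => f b = x)).card : ℝ) :=
    Finset.sum_le_sum_of_subset_of_nonneg (Finset.filter_subset _ _) (fun i _ _ => by positivity)
  refine le_trans hmono (le_of_eq ?_)
  rw [Finset.card_eq_sum_card_image f B]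
  push_cast
  rfl

open Finset in
/-- **2-Dimensional Main Lemma.** If `B, S ⊆ ℝ²` are finite sets such that for every
`(x, y) ∈ S` there is `r > 0` with all four points `(x ± r, y ± r)` in `B`, then
`|B| ≥ (|S| / 2)^(3/4)`. -/
theorem main_lemma_2d (B S : Finset (ℝ × ℝ))
    (h : ∀ p ∈ S, ∃ r > (0 : ℝ),
      (p.1 - r, p.2 - r) ∈ B ∧ (p.1 - r, p.2 + r) ∈ B ∧
      (p.1 + r, p.2 - r) ∈ B ∧ (p.1 + r, p.2 + r) ∈ B) :
    ((S.card : ℝ) / 2) ^ ((3 : ℝ) / 4) ≤ (B.card : ℝ) := by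
  classical
  rcases B.eq_empty_or_nonempty with hB | hB
  · have hS : S = ∅ := by
      rw [Finset.eq_empty_iff_forall_notMem]
      intro p hp
      obtain ⟨r, hr, h1, -, -, -⟩ := h p hp
      simp [hB] at h1
    rw [hS, hB]
    simp only [Finset.card_empty, Nat.cast_zero, zero_div]
    rw [Real.zero_rpow (by norm_num : (3:ℝ)/4 ≠ 0)]
  · choose! r hrpos h1 h2 h3 h4 using h
    have hN1 : (1:ℝ) ≤ (B.card : ℝ) := by exact_mod_cast Finset.card_pos.mpr hB
    have hN0 : (0:ℝ) ≤ (B.card : ℝ) := le_trans zero_le_one hN1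
    have hNpos : (0:ℝ) < (B.card : ℝ) := lt_of_lt_of_le one_pos hN1
    set t : ℝ := (B.card : ℝ) ^ ((1:ℝ)/3) with htdef
    have ht1 : (1:ℝ) ≤ t := by
      have := Real.rpow_le_rpow zero_le_one hN1 (by norm_num : (0:ℝ) ≤ 1/3)
      rwa [Real.one_rpow] at this
    have htpos : (0:ℝ) < t := lt_of_lt_of_le one_pos ht1
    set S₂ := S.filter (fun s => ((B.filter (fun b => b.1 - b.2 = s.1 - s.2)).card : ℝ) ≤ t) with hS₂def
    set S₃ := S.filter (fun s => ((B.filter (fun b => b.1 + b.2 = s.1 + s.2)).card : ℝ) ≤ t) with hS₃def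
    set S₁ := S.filter (fun s => t < ((B.filter (fun b => b.1 - b.2 = s.1 - s.2)).card : ℝ) ∧
        t < ((B.filter (fun b => b.1 + b.2 = s.1 + s.2)).card : ℝ)) with hS₁def
    have hcover : S ⊆ S₁ ∪ (S₂ ∪ S₃) := by
      intro s hs
      simp only [hS₁def, hS₂def, hS₃def, Finset.mem_union, Finset.mem_filter]
      by_cases hc1 : ((B.filter (fun b => b.1 - b.2 = s.1 - s.2)).card : ℝ) ≤ t
      · exact Or.inr (Or.inl ⟨hs, hc1⟩)
      by_cases hc2 : ((B.filter (fun b => b.1 + b.2 = s.1 + s.2)).card : ℝ) ≤ t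
      · exact Or.inr (Or.inr ⟨hs, hc2⟩)
      · exact Or.inl ⟨hs, not_le.mp hc1, not_le.mp hc2⟩
    have hsplit : S.card ≤ S₁.card + (S₂.card + S₃.card) := by
      calc S.card ≤ (S₁ ∪ (S₂ ∪ S₃)).card := Finset.card_le_card hcover
        _ ≤ S₁.card + (S₂ ∪ S₃).card := Finset.card_union_le _ _
        _ ≤ S₁.card + (S₂.card + S₃.card) := by
            exact Nat.add_le_add_left (Finset.card_union_le _ _) _
    -- rich part
    set R₁ := (B.image (fun b => b.1 - b.2)).filter
        (fun x => t < ((B.filter (fun b => b.1 - b.2 = x)).card : ℝ)) with hR₁def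
    set R₂ := (B.image (fun b => b.1 + b.2)).filter
        (fun x => t < ((B.filter (fun b => b.1 + b.2 = x)).card : ℝ)) with hR₂def
    have hS₁card : S₁.card ≤ R₁.card * R₂.card := by
      rw [← Finset.card_product]
      apply Finset.card_le_card_of_injOn (fun s => (s.1 - s.2, s.1 + s.2))
      · intro s hs
        simp only [Finset.mem_coe, hS₁def, Finset.mem_filter] at hs
        obtain ⟨hsS, hr1, hr2⟩ := hs
        rw [Finset.mem_coe, Finset.mem_product]
        constructor
        · rw [hR₁def, Finset.mem_filter]
          refine ⟨?_, hr1⟩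
          rw [Finset.mem_image]
          refine ⟨(s.1 - r s, s.2 - r s), h1 s hsS, ?_⟩
          show (s.1 - r s) - (s.2 - r s) = s.1 - s.2
          ring
        · rw [hR₂def, Finset.mem_filter]
          refine ⟨?_, hr2⟩
          rw [Finset.mem_image]
          refine ⟨(s.1 - r s, s.2 + r s), h2 s hsS, ?_⟩
          show (s.1 - r s) + (s.2 + r s) = s.1 + s.2
          ring
      · intro s hs s' hs' heq
        simp only [Prod.mk.injEq] at heq
        have e1 : s.1 = s'.1 := by linarith [heq.1, heq.2]
        have e2 : s.2 = s'.2 := by linarith [heq.1, heq.2]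
        exact Prod.ext e1 e2
    have hR₁card : (R₁.card : ℝ) ≤ (B.card : ℝ) / t :=
      rich_card B (fun b => b.1 - b.2) t htpos
    have hR₂card : (R₂.card : ℝ) ≤ (B.card : ℝ) / t :=
      rich_card B (fun b => b.1 + b.2) t htpos
    have hS₁R : ((S₁.card : ℝ)) ≤ ((B.card : ℝ)/t) * ((B.card : ℝ)/t) := by
      have hcast : (S₁.card : ℝ) ≤ (R₁.card : ℝ) * (R₂.card : ℝ) := by
        exact_mod_cast hS₁card
      refine le_trans hcast ?_
      exact mul_le_mul hR₁card hR₂card (Nat.cast_nonneg _) (div_nonneg hN0 htpos.le)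
    -- poor parts
    set P₁ := B.filter (fun a => ((B.filter (fun b => b.1 - b.2 = a.1 - a.2)).card : ℝ) ≤ t) with hP₁def
    set P₂ := B.filter (fun a => ((B.filter (fun b => b.1 + b.2 = a.1 + a.2)).card : ℝ) ≤ t) with hP₂def
    have hpair₁ := pair_count B P₁ (fun b => b.1 - b.2) t ht1 (Finset.filter_subset _ _)
      (fun a ha => (Finset.mem_filter.mp ha).2)
    have hpair₂ := pair_count B P₂ (fun b => b.1 + b.2) t ht1 (Finset.filter_subset _ _)
      (fun a ha => (Finset.mem_filter.mp ha).2)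
    have hS₂card : S₂.card ≤
        ((P₁ ×ˢ P₁).filter (fun p => p.1.1 - p.1.2 = p.2.1 - p.2.2 ∧ p.1.1 < p.2.1)).card := by
      apply Finset.card_le_card_of_injOn
        (fun s => ((s.1 - r s, s.2 - r s), (s.1 + r s, s.2 + r s)))
      · intro s hs
        simp only [Finset.mem_coe, hS₂def, Finset.mem_filter] at hs
        obtain ⟨hsS, hpoor⟩ := hs
        rw [Finset.mem_coe, Finset.mem_filter, Finset.mem_product]
        refine ⟨⟨?_, ?_⟩, ?_, ?_⟩
        · rw [hP₁def, Finset.mem_filter]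
          refine ⟨h1 s hsS, ?_⟩
          have hv : ((s.1 - r s, s.2 - r s) : ℝ × ℝ).1 - ((s.1 - r s, s.2 - r s) : ℝ × ℝ).2
              = s.1 - s.2 := by show (s.1 - r s) - (s.2 - r s) = s.1 - s.2; ring
          rw [hv]
          exact hpoor
        · rw [hP₁def, Finset.mem_filter]
          refine ⟨h4 s hsS, ?_⟩
          have hv : ((s.1 + r s, s.2 + r s) : ℝ × ℝ).1 - ((s.1 + r s, s.2 + r s) : ℝ × ℝ).2
              = s.1 - s.2 := by show (s.1 + r s) - (s.2 + r s) = s.1 - s.2; ring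
          rw [hv]
          exact hpoor
        · show (s.1 - r s) - (s.2 - r s) = (s.1 + r s) - (s.2 + r s)
          ring
        · show s.1 - r s < s.1 + r s
          have := hrpos s hsS
          linarith
      · intro s hs s' hs' heq
        simp only [Prod.mk.injEq] at heq
        obtain ⟨⟨e1, e2⟩, e3, e4⟩ := heq
        exact Prod.ext (by linarith) (by linarith)
    have hS₃card : S₃.card ≤
        ((P₂ ×ˢ P₂).filter (fun p => p.1.1 + p.1.2 = p.2.1 + p.2.2 ∧ p.1.1 < p.2.1)).card := by
      apply Finset.card_le_card_of_injOn
        (fun s => ((s.1 - r s, s.2 + r s), (s.1 + r s, s.2 - r s)))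
      · intro s hs
        simp only [Finset.mem_coe, hS₃def, Finset.mem_filter] at hs
        obtain ⟨hsS, hpoor⟩ := hs
        rw [Finset.mem_coe, Finset.mem_filter, Finset.mem_product]
        refine ⟨⟨?_, ?_⟩, ?_, ?_⟩
        · rw [hP₂def, Finset.mem_filter]
          refine ⟨h2 s hsS, ?_⟩
          have hv : ((s.1 - r s, s.2 + r s) : ℝ × ℝ).1 + ((s.1 - r s, s.2 + r s) : ℝ × ℝ).2
              = s.1 + s.2 := by show (s.1 - r s) + (s.2 + r s) = s.1 + s.2; ring
          rw [hv]
          exact hpoor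
        · rw [hP₂def, Finset.mem_filter]
          refine ⟨h3 s hsS, ?_⟩
          have hv : ((s.1 + r s, s.2 - r s) : ℝ × ℝ).1 + ((s.1 + r s, s.2 - r s) : ℝ × ℝ).2
              = s.1 + s.2 := by show (s.1 + r s) + (s.2 - r s) = s.1 + s.2; ring
          rw [hv]
          exact hpoor
        · show (s.1 - r s) + (s.2 + r s) = (s.1 + r s) + (s.2 - r s)
          ring
        · show s.1 - r s < s.1 + r s
          have := hrpos s hsS
          linarith
      · intro s hs s' hs' heq
        simp only [Prod.mk.injEq] at heq
        obtain ⟨⟨e1, e2⟩, e3, e4⟩ := heq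
        exact Prod.ext (by linarith) (by linarith)
    -- combine
    have hS₂R : (S₂.card : ℝ) ≤ (B.card : ℝ) * (t - 1) / 2 := by
      have hc : (S₂.card : ℝ) ≤
          (((P₁ ×ˢ P₁).filter (fun p => p.1.1 - p.1.2 = p.2.1 - p.2.2 ∧ p.1.1 < p.2.1)).card : ℝ) := by
        exact_mod_cast hS₂card
      linarith [hpair₁]
    have hS₃R : (S₃.card : ℝ) ≤ (B.card : ℝ) * (t - 1) / 2 := by
      have hc : (S₃.card : ℝ) ≤
          (((P₂ ×ˢ P₂).filter (fun p => p.1.1 + p.1.2 = p.2.1 + p.2.2 ∧ p.1.1 < p.2.1)).card : ℝ) := by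
        exact_mod_cast hS₃card
      linarith [hpair₂]
    have hSsum : (S.card : ℝ) ≤ ((B.card : ℝ)/t) * ((B.card : ℝ)/t) + (B.card : ℝ) * (t - 1) := by
      have hcast : (S.card : ℝ) ≤ (S₁.card : ℝ) + ((S₂.card : ℝ) + (S₃.card : ℝ)) := by
        exact_mod_cast hsplit
      linarith
    -- rpow arithmetic
    have hA : ((B.card : ℝ)/t) * ((B.card : ℝ)/t) = (B.card : ℝ) ^ ((4:ℝ)/3) := by
      have h23 : (B.card : ℝ)/t = (B.card : ℝ) ^ ((2:ℝ)/3) := by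
        rw [htdef]
        rw [show ((2:ℝ)/3) = 1 - 1/3 by norm_num, Real.rpow_sub hNpos, Real.rpow_one]
      rw [h23, ← Real.rpow_add hNpos]
      norm_num
    have hBt : (B.card : ℝ) * t = (B.card : ℝ) ^ ((4:ℝ)/3) := by
      rw [htdef]
      nth_rewrite 1 [← Real.rpow_one (B.card : ℝ)]
      rw [← Real.rpow_add hNpos]
      norm_num
    have hfinal : (S.card : ℝ) / 2 ≤ (B.card : ℝ) ^ ((4:ℝ)/3) := by
      have hmul : (B.card : ℝ) * (t - 1) = (B.card : ℝ) ^ ((4:ℝ)/3) - (B.card : ℝ) := by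
        rw [mul_sub, hBt, mul_one]
      have h2 : ((B.card : ℝ)/t) * ((B.card : ℝ)/t) + (B.card : ℝ) * (t - 1)
          ≤ 2 * (B.card : ℝ) ^ ((4:ℝ)/3) := by
        rw [hA, hmul]
        linarith
      linarith [hSsum]
    have hmain := Real.rpow_le_rpow
      (div_nonneg (Nat.cast_nonneg _) (by norm_num : (0:ℝ) ≤ 2)) hfinal
      (by norm_num : (0:ℝ) ≤ 3/4)
    have hpow : ((B.card : ℝ) ^ ((4:ℝ)/3)) ^ ((3:ℝ)/4) = (B.card : ℝ) := by
      rw [← Real.rpow_mul hN0]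
      norm_num
    rw [hpow] at hmain
    exact hmain
end
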